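/- For every 1 ≤ i ≤ n−1 and every (a,b) ∈ ℂ² with (a,b) ≠ (0,0), the quotient ℂ[x,y]/I_i(a,b) is an n-dimensional ℂ-vector space: dim_ℂ ℂ[x,y]/I_i(a,b) = n. (Thus I_i(a,b) defines a ℤ_n-cluster, i.e. a length-n ℤ_n-invariant subscheme of ℂ².) -/

import Mathlib

/-!
Let `J = ⟨x^{i+1}, xy, y^{n+1-i}⟩` and `g = a xⁱ - b y^{n-i}`, so that `I_i(a,b) = (g) + J`.
The monomials outside `J` are the `n + 1` "standard" monomials `1, x, …, xⁱ, y, …, y^{n-i}`.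
Since `x g` and `y g` lie in `J`, in fact `I_i(a,b) = ℂ g + J`: passing from `J` to `I_i(a,b)`
only imposes the single linear relation `b y^{n-i} = a xⁱ`. For `b ≠ 0` the standard monomials
other than `y^{n-i}` therefore form a basis of the quotient. The case `b = 0` reduces to this one
through the swap `τ : x ↔ y`, which maps `I_i(a,b)` onto `I_{n-i}(b,a)`.
-/

open MvPolynomial

/-- The Ito–Nakamura ideal `I_i(a,b) = ⟨a·xⁱ − b·y^{n−i}, x^{i+1}, xy, y^{n+1−i}⟩`. -/
noncomputable def itoNak (n i : ℕ) (a b : ℂ) : Ideal (MvPolynomial (Fin 2) ℂ) :=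
  Ideal.span
    {C a * X 0 ^ i - C b * X 1 ^ (n - i), X 0 ^ (i + 1), X 0 * X 1, X 1 ^ (n + 1 - i)}

lemma MvPolynomial.eq_top_of_mkₐ_monomial_mem {σ K : Type*} [CommRing K]
    {I : Ideal (MvPolynomial σ K)} {S : Submodule K (MvPolynomial σ K ⧸ I)}
    (h : ∀ m, Ideal.Quotient.mkₐ K I (monomial m 1) ∈ S) : S = ⊤ := by
  rw [eq_top_iff]
  rintro x -
  obtain ⟨p, rfl⟩ := Ideal.Quotient.mkₐ_surjective K I x
  induction p using MvPolynomial.induction_on' with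
  | monomial m c =>
    rw [← mul_one c, ← smul_eq_mul, ← smul_monomial, map_smul]
    exact S.smul_mem c (h m)
  | add p q hp hq => exact map_add (Ideal.Quotient.mkₐ K I) p q ▸ S.add_mem hp hq

namespace ItoNakamura

variable {n i : ℕ} {a b : ℂ}

noncomputable def binomialGen (n i : ℕ) (a b : ℂ) : MvPolynomial (Fin 2) ℂ :=
  C a * X 0 ^ i - C b * X 1 ^ (n - i)

noncomputable def monomialPart (n i : ℕ) : Ideal (MvPolynomial (Fin 2) ℂ) :=
  Ideal.span {X 0 ^ (i + 1), X 0 * X 1, X 1 ^ (n + 1 - i)}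

noncomputable def monomialPartExponents (n i : ℕ) : Set (Fin 2 →₀ ℕ) :=
  {Finsupp.single 0 (i + 1), Finsupp.single 0 1 + Finsupp.single 1 1,
    Finsupp.single 1 (n + 1 - i)}

def IsStandard (n i : ℕ) (m : Fin 2 →₀ ℕ) : Prop :=
  m 0 ≤ i ∧ m 1 ≤ n - i ∧ (m 0 = 0 ∨ m 1 = 0)

lemma mem_itoNak_iff {p : MvPolynomial (Fin 2) ℂ} :
    p ∈ itoNak n i a b ↔ ∃ r, ∃ q ∈ monomialPart n i, p = r * binomialGen n i a b + q :=
  Ideal.mem_span_insert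

lemma binomialGen_mem_itoNak : binomialGen n i a b ∈ itoNak n i a b :=
  Ideal.subset_span (Set.mem_insert _ _)

lemma monomialPart_le_itoNak : monomialPart n i ≤ itoNak n i a b :=
  Ideal.span_mono (Set.subset_insert _ _)

lemma monomialPart_eq_span_monomial :
    monomialPart n i = Ideal.span ((monomial · (1 : ℂ)) '' monomialPartExponents n i) := by
  rw [monomialPart, monomialPartExponents, X_pow_eq_monomial, X_pow_eq_monomial]
  simp only [Set.image_insert_eq, Set.image_singleton, X, monomial_mul, one_mul]

lemma exists_le_iff_not_isStandard (hi : i ≤ n) (m : Fin 2 →₀ ℕ) :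
    (∃ s ∈ monomialPartExponents n i, s ≤ m) ↔ ¬ IsStandard n i m := by
  simp only [monomialPartExponents, Set.mem_insert_iff, Set.mem_singleton_iff, exists_eq_or_imp,
    exists_eq_left, Finsupp.le_def, Fin.forall_fin_two, IsStandard, Finsupp.coe_add, Pi.add_apply,
    Finsupp.single_eq_same, Finsupp.single_eq_of_ne (zero_ne_one : (0 : Fin 2) ≠ 1),
    Finsupp.single_eq_of_ne (one_ne_zero : (1 : Fin 2) ≠ 0)]
  omega

lemma mem_monomialPart_iff (hi : i ≤ n) {p : MvPolynomial (Fin 2) ℂ} :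
    p ∈ monomialPart n i ↔ ∀ m ∈ p.support, ¬ IsStandard n i m := by
  simp only [monomialPart_eq_span_monomial, mem_ideal_span_monomial_image,
    exists_le_iff_not_isStandard hi]

lemma coeff_eq_zero_of_mem_monomialPart (hi : i ≤ n) {p : MvPolynomial (Fin 2) ℂ}
    (hp : p ∈ monomialPart n i) {m : Fin 2 →₀ ℕ} (hm : IsStandard n i m) : coeff m p = 0 :=
  notMem_support_iff.mp fun hmp => (mem_monomialPart_iff hi).mp hp m hmp hm

lemma monomial_mem_monomialPart (hi : i ≤ n) {m : Fin 2 →₀ ℕ} (hm : ¬ IsStandard n i m)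
    (c : ℂ) : monomial m c ∈ monomialPart n i :=
  (mem_monomialPart_iff hi).mpr fun _ h =>
    Finset.mem_singleton.mp (support_monomial_subset h) ▸ hm

lemma X_mul_binomialGen_mem_monomialPart (h1 : 1 ≤ i) (h2 : i < n) (j : Fin 2) :
    X j * binomialGen n i a b ∈ monomialPart n i := by
  have hx : X 0 ^ (i + 1) ∈ monomialPart n i := Ideal.subset_span (by simp)
  have hxy : X 0 * X 1 ∈ monomialPart n i := Ideal.subset_span (by simp)
  have hy : X 1 ^ (n + 1 - i) ∈ monomialPart n i := Ideal.subset_span (by simp)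
  obtain ⟨k, hk⟩ : ∃ k, n - i = k + 1 := ⟨n - i - 1, by omega⟩
  obtain ⟨l, rfl⟩ : ∃ l, i = l + 1 := ⟨i - 1, by omega⟩
  fin_cases j
  · have : X 0 * binomialGen n (l + 1) a b
        = C a * X 0 ^ (l + 1 + 1) - C b * X 1 ^ k * (X 0 * X 1) := by
      rw [binomialGen, hk]; ring
    exact this ▸ sub_mem (Ideal.mul_mem_left _ _ hx) (Ideal.mul_mem_left _ _ hxy)
  · have : X 1 * binomialGen n (l + 1) a b
        = C a * X 0 ^ l * (X 0 * X 1) - C b * X 1 ^ (n + 1 - (l + 1)) := by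
      rw [binomialGen, show n + 1 - (l + 1) = k + 1 + 1 by omega, hk]; ring
    exact this ▸ sub_mem (Ideal.mul_mem_left _ _ hxy) (Ideal.mul_mem_left _ _ hy)

lemma exists_eq_C_mul_add_of_mem_itoNak (h1 : 1 ≤ i) (h2 : i < n) {p : MvPolynomial (Fin 2) ℂ}
    (hp : p ∈ itoNak n i a b) :
    ∃ c : ℂ, ∃ q ∈ monomialPart n i, p = C c * binomialGen n i a b + q := by
  obtain ⟨r, q, hq, rfl⟩ := mem_itoNak_iff.mp hp
  have hr : r - C (coeff 0 r) ∈ idealOfVars (Fin 2) ℂ := by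
    rw [← pow_one (idealOfVars _ _), mem_pow_idealOfVars_iff']
    intro m hm
    simp [show m = 0 by simpa [Finsupp.degree_eq_zero_iff] using hm]
  have hcolon : idealOfVars (Fin 2) ℂ ≤ (monomialPart n i).colon {binomialGen n i a b} := by
    rw [idealOfVars, Ideal.span_le, Set.range_subset_iff]
    exact fun j => Submodule.mem_colon_singleton.mpr (X_mul_binomialGen_mem_monomialPart h1 h2 j)
  refine ⟨coeff 0 r, (r - C (coeff 0 r)) * binomialGen n i a b + q,
    add_mem (Submodule.mem_colon_singleton.mp (hcolon hr)) hq, by ring⟩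

noncomputable def staircase (n i : ℕ) : Fin (i + 1) ⊕ Fin (n - 1 - i) → Fin 2 →₀ ℕ :=
  Sum.elim (fun k => Finsupp.single 0 k) (fun k => Finsupp.single 1 (k + 1))

lemma staircase_injective : Function.Injective (staircase n i) := by
  rintro (k | k) (l | l) h <;>
    simp only [staircase, Sum.elim_inl, Sum.elim_inr, Finsupp.single_eq_single_iff] at h <;>
    simp only [Sum.inl.injEq, Sum.inr.injEq, reduceCtorEq, Fin.ext_iff] <;>
    omega

lemma mem_range_staircase_iff (hi : i < n) {m : Fin 2 →₀ ℕ} :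
    m ∈ Set.range (staircase n i) ↔ IsStandard n i m ∧ m ≠ Finsupp.single 1 (n - i) := by
  constructor
  · rintro ⟨k | k, rfl⟩ <;>
      simp only [staircase, Sum.elim_inl, Sum.elim_inr, IsStandard, ne_eq, or_true, true_or,
        and_true, zero_ne_one, false_and, false_or, Finsupp.single_eq_single_iff,
        Finsupp.single_eq_same,
        Finsupp.single_eq_of_ne (zero_ne_one : (0 : Fin 2) ≠ 1),
        Finsupp.single_eq_of_ne (one_ne_zero : (1 : Fin 2) ≠ 0)] <;>
      omega
  · rintro ⟨⟨hx, hy, hxy⟩, hne⟩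
    by_cases hm1 : m 1 = 0
    · refine ⟨.inl ⟨m 0, by omega⟩, ?_⟩
      ext j; fin_cases j <;> simp [staircase, hm1]
    · have hm : m = Finsupp.single 1 (m 1) := by
        ext j; fin_cases j <;> simp [hxy.resolve_right hm1]
      have hne' : m 1 ≠ n - i := fun h => hne (hm.trans (by rw [h]))
      refine ⟨.inr ⟨m 1 - 1, by omega⟩, ?_⟩
      refine Eq.trans ?_ hm.symm
      simp only [staircase, Sum.elim_inr]
      congr 1
      omega

lemma eq_zero_of_mem_itoNak (h1 : 1 ≤ i) (h2 : i < n) (hb : b ≠ 0)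
    {p : MvPolynomial (Fin 2) ℂ} (hp : p ∈ itoNak n i a b)
    (hsupp : ↑p.support ⊆ Set.range (staircase n i)) : p = 0 := by
  obtain ⟨c, q, hq, rfl⟩ := exists_eq_C_mul_add_of_mem_itoNak h1 h2 hp
  -- `y^{n-i}` is a standard monomial outside the support of `p`; its coefficient is `-c b`.
  have hy : coeff (Finsupp.single 1 (n - i)) (C c * binomialGen n i a b + q) = 0 :=
    notMem_support_iff.mp fun h => ((mem_range_staircase_iff h2).mp (hsupp h)).2 rfl
  rw [coeff_add, coeff_C_mul, binomialGen, coeff_sub, coeff_C_mul, coeff_C_mul, coeff_X_pow,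
    coeff_X_pow, coeff_eq_zero_of_mem_monomialPart h2.le hq (by simp [IsStandard])] at hy
  rw [if_neg (by simp only [Finsupp.single_eq_single_iff]; omega), if_pos rfl] at hy
  obtain rfl : c = 0 := by simpa [hb] using hy
  rw [C_0, zero_mul, zero_add] at hsupp ⊢
  ext m
  by_contra hm
  exact (mem_monomialPart_iff h2.le).mp hq m (mem_support_iff.mpr hm)
    ((mem_range_staircase_iff h2).mp (hsupp (mem_support_iff.mpr hm))).1

lemma linearIndependent_mk_staircase (h1 : 1 ≤ i) (h2 : i < n) (hb : b ≠ 0) :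
    LinearIndependent ℂ fun s =>
      Ideal.Quotient.mkₐ ℂ (itoNak n i a b) (monomial (staircase n i s) 1) := by
  have hv : LinearIndependent ℂ fun s => monomial (staircase n i s) (1 : ℂ) :=
    (basisMonomials (Fin 2) ℂ).linearIndependent.comp _ staircase_injective
  have hspan : Submodule.span ℂ (Set.range fun s => monomial (staircase n i s) (1 : ℂ))
      = restrictSupport ℂ (Set.range (staircase n i)) := by
    rw [restrictSupport_eq_span, ← Set.range_comp]
    rfl
  refine hv.map (f := (Ideal.Quotient.mkₐ ℂ (itoNak n i a b)).toLinearMap) ?_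
  rw [Submodule.disjoint_def, hspan]
  intro p hp hpI
  exact eq_zero_of_mem_itoNak h1 h2 hb (Ideal.Quotient.eq_zero_iff_mem.mp hpI)
    ((mem_restrictSupport_iff ℂ).mp hp)

lemma span_range_mk_staircase (h2 : i < n) (hb : b ≠ 0) :
    Submodule.span ℂ (Set.range fun s =>
      Ideal.Quotient.mkₐ ℂ (itoNak n i a b) (monomial (staircase n i s) 1)) = ⊤ := by
  set mk := Ideal.Quotient.mkₐ ℂ (itoNak n i a b)
  have hrel : b • mk (monomial (Finsupp.single 1 (n - i)) 1)
      = a • mk (monomial (Finsupp.single 0 i) 1) := by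
    have hg : mk (binomialGen n i a b) = 0 :=
      Ideal.Quotient.eq_zero_iff_mem.mpr binomialGen_mem_itoNak
    rw [binomialGen, C_mul_X_pow_eq_monomial, C_mul_X_pow_eq_monomial, map_sub,
      sub_eq_zero] at hg
    simp only [← map_smul, smul_eq_mul, mul_one, hg]
  refine MvPolynomial.eq_top_of_mkₐ_monomial_mem fun m => ?_
  by_cases hm : IsStandard n i m
  · by_cases hy : m = Finsupp.single 1 (n - i)
    · subst hy
      rw [← inv_smul_smul₀ hb (mk _), hrel, smul_smul]
      exact Submodule.smul_mem _ _ (Submodule.subset_span ⟨.inl (Fin.last i), rfl⟩)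
    · obtain ⟨s, rfl⟩ := (mem_range_staircase_iff h2).mpr ⟨hm, hy⟩
      exact Submodule.subset_span ⟨s, rfl⟩
  · have : mk (monomial m 1) = 0 := Ideal.Quotient.eq_zero_iff_mem.mpr
      (monomialPart_le_itoNak (monomial_mem_monomialPart h2.le hm 1))
    exact this ▸ Submodule.zero_mem _

lemma finrank_quotient_itoNak_of_ne_zero (h1 : 1 ≤ i) (h2 : i < n) (hb : b ≠ 0) :
    Module.finrank ℂ (MvPolynomial (Fin 2) ℂ ⧸ itoNak n i a b) = n := by
  rw [Module.finrank_eq_card_basis (.mk (linearIndependent_mk_staircase h1 h2 hb)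
    (span_range_mk_staircase h2 hb).ge), Fintype.card_sum, Fintype.card_fin, Fintype.card_fin]
  omega

lemma itoNak_swap (hi : i ≤ n) : itoNak n (n - i) b a =
    (itoNak n i a b).map (renameEquiv ℂ (Equiv.swap (0 : Fin 2) 1) : _ →+* _) := by
  simp only [itoNak, Ideal.map_span, Set.image_insert_eq, Set.image_singleton, RingHom.coe_coe,
    renameEquiv_apply, map_sub, map_mul, map_pow, rename_C, rename_X, Equiv.swap_apply_left,
    Equiv.swap_apply_right]
  rw [show n - (n - i) = i by omega, show n - i + 1 = n + 1 - i by omega,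
    show n + 1 - (n - i) = i + 1 by omega, Ideal.span_insert, Ideal.span_insert (_ - _),
    ← Ideal.span_singleton_neg, neg_sub, mul_comm (X 1), Set.insert_comm, Set.pair_comm,
    Set.insert_comm (X 0 * X 1)]

end ItoNakamura

/-- for `(a,b) ≠ (0,0)`, `dim_ℂ ℂ[x,y]/I_i(a,b) = n`. -/
theorem itoNak_colength (n i : ℕ) (h1 : 1 ≤ i) (h2 : i ≤ n - 1) (a b : ℂ)
    (hab : ¬(a = 0 ∧ b = 0)) :
    Module.finrank ℂ (MvPolynomial (Fin 2) ℂ ⧸ itoNak n i a b) = n := by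
  have hi : i < n := by omega
  by_cases hb : b = 0
  · have ha : a ≠ 0 := fun ha => hab ⟨ha, hb⟩
    rw [(Ideal.quotientEquivAlg _ _ _ (ItoNakamura.itoNak_swap hi.le)).toLinearEquiv.finrank_eq]
    exact ItoNakamura.finrank_quotient_itoNak_of_ne_zero (by omega) (by omega) ha
  · exact ItoNakamura.finrank_quotient_itoNak_of_ne_zero h1 hi hb
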